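/- (Characterization of pure intelligent states.) Let h be self-adjoint on a finite-dimensional Hilbert space and φ a unit vector with (Δh)_φ > 0. If P_φ(t) = cos²((Δh)_φ t) for all t ∈ ℝ, then there exist vectors φ₁, φ₂ with hφᵢ = ωᵢφᵢ, ω₁ < ω₂, ‖φᵢ‖² = 1/2, and φ = φ₁ + φ₂. -/

import Mathlib

open scoped InnerProductSpace
open Complex Filter Asymptotics

noncomputable section

variable {H : Type*} [NormedAddCommGroup H] [InnerProductSpace ℂ H] [FiniteDimensional ℂ H]

/-- |φ⟩⟨ψ| -/
def ketbra (φ ψ : H) : H →L[ℂ] H := (innerSL ℂ ψ).smulRight φ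

def tr (A : H →L[ℂ] H) : ℂ := LinearMap.trace ℂ H A.toLinearMap

/-- e^{-iht} -/
def timeEv (h : H →L[ℂ] H) (t : ℝ) : H →L[ℂ] H :=
  NormedSpace.exp ((-(Complex.I * (t : ℂ))) • h)

def expVec (h : H →L[ℂ] H) (φ : H) : ℝ := (⟪φ, h φ⟫_ℂ).re
def varVec (h : H →L[ℂ] H) (φ : H) : ℝ := (⟪φ, h (h φ)⟫_ℂ).re - (expVec h φ) ^ 2
def expMix (h ρ : H →L[ℂ] H) : ℝ := (tr (h ∘L ρ)).re
def varMix (h ρ : H →L[ℂ] H) : ℝ := (tr (h ∘L h ∘L ρ)).re - (expMix h ρ) ^ 2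
def survP (h : H →L[ℂ] H) (φ : H) (t : ℝ) : ℝ := ‖⟪φ, timeEv h t φ⟫_ℂ‖ ^ 2
def survPMix (h ρ Pr : H →L[ℂ] H) (t : ℝ) : ℝ :=
  (tr (Pr ∘L timeEv h t ∘L ρ ∘L timeEv h (-t))).re

/-!
Expand `φ` in an orthonormal eigenbasis `bᵢ` of `h`, with weights `pᵢ = ‖⟪bᵢ, φ⟫‖²` and eigenvalues
`μᵢ`. The survival probability becomes `∑ⱼ ∑ₖ pⱼ pₖ cos ((μⱼ - μₖ) t)`; equating it with
`cos² (Δ t) = 1/2 + cos (2Δ t) / 2` and comparing even derivatives at `0` gives the moments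
`∑ⱼ ∑ₖ pⱼ pₖ (μⱼ - μₖ) ^ (2m) = (0 ^ (2m) + (2Δ) ^ (2m)) / 2`. The combination
`d² (d² - 4Δ²)²` of the second, fourth and sixth moments vanishes and has nonnegative terms, so two
eigenvalues charged by `φ` differ by `0` or `±2Δ`. Hence `φ` lives on two eigenvalues
`ω₁ < ω₂ = ω₁ + 2Δ`, and the zeroth and second moments force both weights to be `1/2`.
-/

open Finset

theorem ContinuousLinearMap.exp_apply_of_apply_eq_smul {E : Type*} [NormedAddCommGroup E]
    [NormedSpace ℂ E] [CompleteSpace E] {A : E →L[ℂ] E} {v : E} {c : ℂ} (hv : A v = c • v) :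
    NormedSpace.exp A v = Complex.exp c • v := by
  have hpow (n : ℕ) : (A ^ n) v = c ^ n • v := by
    induction n with
    | zero => simp
    | succ n ih => rw [pow_succ', mul_apply_eq_comp, ih, map_smul, hv, smul_smul, pow_succ]
  have hA := (ContinuousLinearMap.apply ℂ E v).hasSum
    (NormedSpace.exp_series_hasSum_exp' (𝕂 := ℂ) A)
  have hc := (NormedSpace.exp_series_hasSum_exp' (𝕂 := ℂ) c).smul_const v
  rw [← Complex.exp_eq_exp_ℂ] at hc
  refine hA.unique ?_
  simpa [hpow, smul_smul] using hc

theorem timeEv_apply_of_apply_eq_smul {h : H →L[ℂ] H} {v : H} {ω : ℝ} (hv : h v = (ω : ℂ) • v)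
    (t : ℝ) : timeEv h t v = Complex.exp (↑(-(ω * t)) * I) • v := by
  rw [timeEv, ContinuousLinearMap.exp_apply_of_apply_eq_smul (c := -(I * t) * ω)]
  · push_cast
    ring_nf
  · rw [smul_apply, hv, smul_smul]

theorem Complex.sq_norm_sum_ofReal_mul_exp {ι : Type*} (s : Finset ι) (p θ : ι → ℝ) :
    ‖∑ j ∈ s, (p j : ℂ) * exp (θ j * I)‖ ^ 2
      = ∑ j ∈ s, ∑ k ∈ s, p j * p k * Real.cos (θ j - θ k) := by
  rw [← normSq_eq_norm_sq, ← ofReal_re (normSq _), ← mul_conj, map_sum, sum_mul_sum, re_sum]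
  refine sum_congr rfl fun j _ => ?_
  rw [re_sum]
  refine sum_congr rfl fun k _ => ?_
  rw [map_mul, conj_ofReal, ← exp_conj, map_mul, conj_ofReal, conj_I]
  have hterm : (p j : ℂ) * exp (θ j * I) * (p k * exp (θ k * -I))
      = ↑(p j * p k) * exp (↑(θ j - θ k) * I) := by
    rw [mul_mul_mul_comm, ← exp_add]
    push_cast
    ring_nf
  rw [hterm, re_ofReal_mul, exp_ofReal_mul_I_re]

theorem Orthonormal.sq_norm_sum_smul {𝕜 E ι : Type*} [RCLike 𝕜] [NormedAddCommGroup E]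
    [InnerProductSpace 𝕜 E] {v : ι → E} (hv : Orthonormal 𝕜 v) (c : ι → 𝕜) (s : Finset ι) :
    ‖∑ i ∈ s, c i • v i‖ ^ 2 = ∑ i ∈ s, ‖c i‖ ^ 2 := by
  rw [← inner_self_eq_norm_sq (𝕜 := 𝕜), hv.inner_sum, map_sum]
  refine sum_congr rfl fun i _ => ?_
  rw [RCLike.conj_mul, ← RCLike.ofReal_pow, RCLike.ofReal_re]

theorem survP_eq_sum_sum_cos {ι : Type*} [Fintype ι] {h : H →L[ℂ] H} (b : OrthonormalBasis ι ℂ H)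
    {μ : ι → ℝ} (hb : ∀ i, h (b i) = (μ i : ℂ) • b i) (φ : H) (t : ℝ) :
    survP h φ t = ∑ j, ∑ k, ‖b.repr φ j‖ ^ 2 * ‖b.repr φ k‖ ^ 2 * Real.cos ((μ j - μ k) * t) := by
  have hamp : ⟪φ, timeEv h t φ⟫_ℂ
      = ∑ j, ((‖b.repr φ j‖ ^ 2 : ℝ) : ℂ) * exp (↑(-(μ j * t)) * I) := by
    nth_rw 2 [← b.sum_repr φ]
    rw [map_sum, inner_sum]
    refine sum_congr rfl fun j _ => ?_
    rw [map_smul, timeEv_apply_of_apply_eq_smul (hb j), inner_smul_right, inner_smul_right,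
      ← inner_conj_symm, ← b.repr_apply_apply, ← mul_assoc, mul_comm, ← mul_assoc, conj_mul']
    push_cast
    rfl
  rw [survP, hamp, Complex.sq_norm_sum_ofReal_mul_exp]
  refine sum_congr rfl fun j _ => sum_congr rfl fun k _ => ?_
  rw [← Real.cos_neg]
  ring_nf

theorem iteratedDeriv_even_sum_mul_cos {ι : Type*} (s : Finset ι) (a ω : ι → ℝ) (m : ℕ) :
    iteratedDeriv (2 * m) (fun t => ∑ i ∈ s, a i * Real.cos (ω i * t)) 0
      = (-1) ^ m * ∑ i ∈ s, a i * ω i ^ (2 * m) := by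
  rw [iteratedDeriv_fun_sum (fun i _ => by fun_prop), mul_sum]
  refine sum_congr rfl fun i _ => ?_
  rw [iteratedDeriv_const_mul_field, iteratedDeriv_comp_const_mul Real.contDiff_cos,
    Real.iteratedDeriv_even_cos]
  simp only [Pi.mul_apply, Pi.pow_apply, Pi.neg_apply, Pi.one_apply, mul_zero, Real.cos_zero]
  ring

theorem sum_mul_pow_eq_of_sum_mul_cos_eq {ι κ : Type*} (s : Finset ι) (u : Finset κ)
    {a ω : ι → ℝ} {b ν : κ → ℝ}
    (h : ∀ t, ∑ i ∈ s, a i * Real.cos (ω i * t) = ∑ j ∈ u, b j * Real.cos (ν j * t)) (m : ℕ) :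
    ∑ i ∈ s, a i * ω i ^ (2 * m) = ∑ j ∈ u, b j * ν j ^ (2 * m) := by
  have := congrArg (fun f => iteratedDeriv (2 * m) f 0) (funext h)
  simp only [iteratedDeriv_even_sum_mul_cos] at this
  exact mul_left_cancel₀ (pow_ne_zero _ (by norm_num)) this

theorem Finset.sum_eq_sum_filter_add_sum_filter_of_ne_zero {ι α M : Type*} [DecidableEq α]
    [AddCommMonoid M] {s : Finset ι} {f : ι → M} {g : ι → α} {a b : α} (hab : a ≠ b)
    (hf : ∀ i ∈ s, f i ≠ 0 → g i = a ∨ g i = b) :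
    ∑ i ∈ s, f i = ∑ i ∈ s with g i = a, f i + ∑ i ∈ s with g i = b, f i := by
  classical
  rw [← sum_union (disjoint_filter.2 fun i _ ha hb => hab (ha.symm.trans hb)), ← filter_or,
    sum_filter_of_ne hf]

section

variable {ι : Type*} [Fintype ι]

/-- The survival probability of weights `p` on the energy levels `μ` is `cos² (Δ t)`. -/
def CosSqSurvival (p μ : ι → ℝ) (Δ : ℝ) : Prop :=
  ∀ t, ∑ j, ∑ k, p j * p k * Real.cos ((μ j - μ k) * t) = Real.cos (Δ * t) ^ 2

variable {p μ : ι → ℝ} {Δ : ℝ}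

namespace CosSqSurvival

theorem sum_sum_mul_sub_pow_eq (hcorr : CosSqSurvival p μ Δ) (m : ℕ) :
    ∑ j, ∑ k, p j * p k * (μ j - μ k) ^ (2 * m) = (0 ^ (2 * m) + (2 * Δ) ^ (2 * m)) / 2 := by
  have hcos : ∀ t, ∑ x : ι × ι, p x.1 * p x.2 * Real.cos ((μ x.1 - μ x.2) * t)
      = ∑ i : Fin 2, ![1 / 2, 1 / 2] i * Real.cos (![0, 2 * Δ] i * t) := by
    intro t
    rw [Fintype.sum_prod_type, hcorr, Fin.sum_univ_two, Real.cos_sq]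
    simp only [Matrix.cons_val_zero, Matrix.cons_val_one, zero_mul, Real.cos_zero]
    ring_nf
  have := sum_mul_pow_eq_of_sum_mul_cos_eq _ _ hcos m
  rw [Fintype.sum_prod_type, Fin.sum_univ_two] at this
  rw [this]
  simp only [Matrix.cons_val_zero, Matrix.cons_val_one]
  ring

theorem sum_eq_one (hcorr : CosSqSurvival p μ Δ) (hp : ∀ i, 0 ≤ p i) : ∑ i, p i = 1 := by
  have hsq := hcorr.sum_sum_mul_sub_pow_eq 0
  simp only [mul_zero, pow_zero, mul_one, ← sum_mul_sum] at hsq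
  nlinarith [sum_nonneg fun i (_ : i ∈ univ) => hp i]

theorem eq_or_sub_sq_eq (hcorr : CosSqSurvival p μ Δ) (hp : ∀ i, 0 ≤ p i) {j k : ι}
    (hj : p j ≠ 0) (hk : p k ≠ 0) : μ j = μ k ∨ (μ j - μ k) ^ 2 = (2 * Δ) ^ 2 := by
  have hM := hcorr.sum_sum_mul_sub_pow_eq
  have hzero : ∑ j, ∑ k, p j * p k * ((μ j - μ k) ^ 2 * ((μ j - μ k) ^ 2 - (2 * Δ) ^ 2) ^ 2) = 0 :=
    calc _ = ∑ j, ∑ k, (p j * p k * (μ j - μ k) ^ (2 * 3)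
            - 2 * (2 * Δ) ^ 2 * (p j * p k * (μ j - μ k) ^ (2 * 2))
            + (2 * Δ) ^ 4 * (p j * p k * (μ j - μ k) ^ (2 * 1))) := by
          congr! 2 with j _ k _
          ring
      _ = 0 := by
          simp only [sum_add_distrib, sum_sub_distrib, ← mul_sum, hM]
          ring
  have hnonneg : ∀ j k, 0 ≤ p j * p k * ((μ j - μ k) ^ 2 * ((μ j - μ k) ^ 2 - (2 * Δ) ^ 2) ^ 2) :=
    fun j k => by have := hp j; have := hp k; positivity
  have hjk := (sum_eq_zero_iff_of_nonneg fun j _ => sum_nonneg fun k _ => hnonneg j k).1 hzero j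
    (mem_univ j)
  have := (sum_eq_zero_iff_of_nonneg fun k _ => hnonneg j k).1 hjk k (mem_univ k)
  simpa only [mul_eq_zero, hj, hk, false_or, pow_eq_zero_iff two_ne_zero (M₀ := ℝ), sub_eq_zero]
    using this

theorem exists_gap (hcorr : CosSqSurvival p μ Δ) (hp : ∀ i, 0 ≤ p i) (hΔ : 0 < Δ) :
    ∃ j k, p j ≠ 0 ∧ p k ≠ 0 ∧ μ k = μ j + 2 * Δ := by
  have hM := hcorr.sum_sum_mul_sub_pow_eq 1
  obtain ⟨j, -, hj⟩ := exists_ne_zero_of_sum_ne_zero (hM.trans_ne (by positivity))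
  obtain ⟨k, -, hk⟩ := exists_ne_zero_of_sum_ne_zero hj
  simp only [ne_eq, mul_eq_zero, not_or, pow_eq_zero_iff (by norm_num : 2 * 1 ≠ 0), sub_eq_zero]
    at hk
  obtain ⟨⟨hpj, hpk⟩, hne⟩ := hk
  rcases hcorr.eq_or_sub_sq_eq hp hpj hpk with h | h
  · exact absurd h hne
  rcases sq_eq_sq_iff_eq_or_eq_neg.1 h with h | h
  · exact ⟨k, j, hpk, hpj, by linarith⟩
  · exact ⟨j, k, hpj, hpk, by linarith⟩

theorem eq_or_eq_of_gap (hcorr : CosSqSurvival p μ Δ) (hp : ∀ i, 0 ≤ p i) (hΔ : 0 < Δ)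
    {j k : ι} (hj : p j ≠ 0) (hk : p k ≠ 0) (hjk : μ k = μ j + 2 * Δ) {i : ι} (hi : p i ≠ 0) :
    μ i = μ j ∨ μ i = μ k := by
  rcases hcorr.eq_or_sub_sq_eq hp hi hj with h₁ | h₁
  · exact .inl h₁
  rcases hcorr.eq_or_sub_sq_eq hp hi hk with h₂ | h₂
  · exact .inr h₂
  have hmid : μ i - μ j = Δ := by
    have : 4 * Δ * (μ i - μ j - Δ) = 0 := by rw [hjk] at h₂; linear_combination h₁ - h₂
    simpa [hΔ.ne', sub_eq_zero] using this
  rw [hmid] at h₁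
  nlinarith

theorem sum_filter_eq_half (hcorr : CosSqSurvival p μ Δ) (hp : ∀ i, 0 ≤ p i) (hΔ : 0 < Δ)
    {ω₁ ω₂ : ℝ} (hω : ω₂ = ω₁ + 2 * Δ) (hsupp : ∀ i, p i ≠ 0 → μ i = ω₁ ∨ μ i = ω₂) :
    ∑ i with μ i = ω₁, p i = 1 / 2 ∧ ∑ i with μ i = ω₂, p i = 1 / 2 := by
  set P := ∑ i with μ i = ω₁, p i
  set Q := ∑ i with μ i = ω₂, p i
  have hsplit (g : ℝ → ℝ) : ∑ i, p i * g (μ i) = P * g ω₁ + Q * g ω₂ := by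
    rw [sum_eq_sum_filter_add_sum_filter_of_ne_zero (by linarith : ω₁ ≠ ω₂)
      fun i _ hi => hsupp i (left_ne_zero_of_mul hi), sum_mul, sum_mul]
    congr 1 <;> exact sum_congr rfl fun i hi => by rw [(mem_filter.1 hi).2]
  have hsum : P + Q = 1 := by
    simpa using (hsplit fun _ => 1).symm.trans (by simpa using hcorr.sum_eq_one hp)
  have hvar : ∑ j, ∑ k, p j * p k * (μ j - μ k) ^ 2 = 8 * P * Q * Δ ^ 2 :=
    calc _ = ∑ j, p j * (P * (μ j - ω₁) ^ 2 + Q * (μ j - ω₂) ^ 2) :=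
          sum_congr rfl fun j _ => by
            rw [← hsplit fun x => (μ j - x) ^ 2, mul_sum]
            simp only [mul_assoc]
      _ = P * (P * (ω₁ - ω₁) ^ 2 + Q * (ω₁ - ω₂) ^ 2)
            + Q * (P * (ω₂ - ω₁) ^ 2 + Q * (ω₂ - ω₂) ^ 2) :=
          hsplit fun x => P * (x - ω₁) ^ 2 + Q * (x - ω₂) ^ 2
      _ = 8 * P * Q * Δ ^ 2 := by rw [hω]; ring
  have hPQ : P * Q = 1 / 4 := by
    have hM := hcorr.sum_sum_mul_sub_pow_eq 1
    rw [hvar] at hM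
    have : (P * Q - 1 / 4) * Δ ^ 2 = 0 := by linear_combination hM / 8
    simpa [hΔ.ne', sub_eq_zero] using this
  have hPQeq : P = Q := by nlinarith [sq_nonneg (P - Q)]
  constructor <;> linarith

theorem exists_two_levels (hcorr : CosSqSurvival p μ Δ) (hp : ∀ i, 0 ≤ p i) (hΔ : 0 < Δ) :
    ∃ ω₁ ω₂ : ℝ, ω₁ < ω₂ ∧ (∀ i, p i ≠ 0 → μ i = ω₁ ∨ μ i = ω₂)
      ∧ ∑ i with μ i = ω₁, p i = 1 / 2 ∧ ∑ i with μ i = ω₂, p i = 1 / 2 := by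
  obtain ⟨j, k, hj, hk, hjk⟩ := hcorr.exists_gap hp hΔ
  have hsupp (i : ι) := hcorr.eq_or_eq_of_gap hp hΔ hj hk hjk (i := i)
  exact ⟨μ j, μ k, by linarith, hsupp, hcorr.sum_filter_eq_half hp hΔ hjk hsupp⟩

end CosSqSurvival

end

theorem apply_sum_filter_smul_eq_smul {E ι : Type*} [NormedAddCommGroup E] [NormedSpace ℂ E]
    [Fintype ι] {h : E →L[ℂ] E} {v : ι → E} {μ : ι → ℝ} (hv : ∀ i, h (v i) = (μ i : ℂ) • v i)
    (c : ι → ℂ) (ω : ℝ) :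
    h (∑ i with μ i = ω, c i • v i) = (ω : ℂ) • ∑ i with μ i = ω, c i • v i := by
  rw [map_sum, smul_sum]
  refine sum_congr rfl fun i hi => ?_
  rw [map_smul, hv, (mem_filter.1 hi).2, smul_comm]

theorem stmt11_general (h : H →L[ℂ] H) (hsa : IsSelfAdjoint h) (φ : H)
    (hΔ : 0 < Real.sqrt (varVec h φ))
    (hsat : ∀ t : ℝ, survP h φ t = Real.cos (Real.sqrt (varVec h φ) * t) ^ 2) :
    ∃ (ω₁ ω₂ : ℝ) (φ₁ φ₂ : H), ω₁ < ω₂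
      ∧ h φ₁ = (ω₁ : ℂ) • φ₁ ∧ h φ₂ = (ω₂ : ℂ) • φ₂
      ∧ ‖φ₁‖ ^ 2 = 1 / 2 ∧ ‖φ₂‖ ^ 2 = 1 / 2 ∧ φ = φ₁ + φ₂ := by
  have hsym : (h : H →ₗ[ℂ] H).IsSymmetric := hsa.isSymmetric
  set b := hsym.eigenvectorBasis rfl
  set μ := hsym.eigenvalues rfl
  have hb : ∀ i, h (b i) = (μ i : ℂ) • b i := hsym.apply_eigenvectorBasis rfl
  have hcorr : CosSqSurvival (fun i => ‖b.repr φ i‖ ^ 2) μ (Real.sqrt (varVec h φ)) := fun t => by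
    rw [← survP_eq_sum_sum_cos b hb, hsat]
  obtain ⟨ω₁, ω₂, hlt, hsupp, h₁, h₂⟩ := hcorr.exists_two_levels (fun i => by positivity) hΔ
  refine ⟨ω₁, ω₂, ∑ i with μ i = ω₁, b.repr φ i • b i, ∑ i with μ i = ω₂, b.repr φ i • b i, hlt,
    apply_sum_filter_smul_eq_smul hb _ _, apply_sum_filter_smul_eq_smul hb _ _, ?_, ?_, ?_⟩
  · rw [b.orthonormal.sq_norm_sum_smul, h₁]
  · rw [b.orthonormal.sq_norm_sum_smul, h₂]
  · conv_lhs => rw [← b.sum_repr φ]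
    exact sum_eq_sum_filter_add_sum_filter_of_ne_zero hlt.ne fun i _ hi =>
      hsupp i (pow_ne_zero 2 (norm_ne_zero_iff.2 (left_ne_zero_of_smul hi)))

theorem stmt11 (h : H →L[ℂ] H) (hsa : IsSelfAdjoint h) (φ : H) (hφ : ‖φ‖ = 1)
    (hΔ : 0 < Real.sqrt (varVec h φ))
    (hsat : ∀ t : ℝ, survP h φ t = Real.cos (Real.sqrt (varVec h φ) * t) ^ 2) :
    ∃ (ω₁ ω₂ : ℝ) (φ₁ φ₂ : H), ω₁ < ω₂
      ∧ h φ₁ = (ω₁ : ℂ) • φ₁ ∧ h φ₂ = (ω₂ : ℂ) • φ₂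
      ∧ ‖φ₁‖ ^ 2 = 1 / 2 ∧ ‖φ₂‖ ^ 2 = 1 / 2 ∧ φ = φ₁ + φ₂ :=
  stmt11_general h hsa φ hΔ hsat
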